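/- arXiv:2602.14503 — 2 statements merged into one kernel-verified Lean document; each statement's English description precedes it below -/
import Mathlib

section
/- Covariate-refined lower bound on PNS (special case of Theorem 1 for a binary model with one non-descendant covariate): for every P as in the context, P(Y₁ = true ∧ Y₀ = false) ≥ Σ_{z ∈ Z} max {0, P(Y₁ = true ∧ Z = z) − P(Y₀ = true ∧ Z = z), P(Y = true ∧ Z = z) − P(Y₀ = true ∧ Z = z), P(Y₁ = true ∧ Z = z) − P(Y = true ∧ Z = z)}. -/
/-!
In each stratum `Z = z`, every one of the three differences has the form `P(A ∧ z) - P(B ∧ z)`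
with `A ⊆ B ∪ PNS`: trivially `Y₁ ⊆ Y₀ ∪ PNS`, and by consistency `Y ⊆ Y₀ ∪ PNS` and
`Y₁ ⊆ Y ∪ PNS`. So each is at most `P(PNS ∧ z)`, and these add up over the strata to `P(PNS)`.
-/

/-- The probability of an event `E` under a mass function `P` on a finite type. -/
noncomputable def prob {Ω : Type*} [Fintype Ω] (P : Ω → ℝ) (E : Set Ω) : ℝ :=
  ∑ ω, E.indicator P ω

/-- The binary counterfactual sample space with one covariate: coordinates
`(Y₀, Y₁, X, Z)`, i.e. the potential outcomes `Y₀ = Y_{x'}` and `Y₁ = Y_x`, the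
treatment `X`, and a non-descendant covariate `Z`. -/
abbrev ZOmega (Z : Type) : Type := Bool × Bool × Bool × Z

/-- The observed outcome defined by consistency: `Y := if X then Y₁ else Y₀`. -/
def Yobs {Z : Type} (ω : ZOmega Z) : Bool := if ω.2.2.1 then ω.2.1 else ω.1

section Prob

variable {Ω : Type*} [Fintype Ω] (P : Ω → ℝ)

lemma prob_nonneg (hP0 : ∀ ω, 0 ≤ P ω) (E : Set Ω) : 0 ≤ prob P E :=
  Finset.sum_nonneg fun ω _ => Set.indicator_nonneg (fun ω _ => hP0 ω) ω

lemma prob_mono (hP0 : ∀ ω, 0 ≤ P ω) {S T : Set Ω} (h : S ⊆ T) : prob P S ≤ prob P T :=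
  Finset.sum_le_sum fun ω _ => Set.indicator_le_indicator_of_subset h hP0 ω

lemma prob_union_add_inter (S T : Set Ω) :
    prob P (S ∪ T) + prob P (S ∩ T) = prob P S + prob P T := by
  simp only [prob, ← Finset.sum_add_distrib]
  exact Finset.sum_congr rfl fun ω _ => congrFun (Set.indicator_union_add_inter P S T) ω

lemma prob_union_le (hP0 : ∀ ω, 0 ≤ P ω) (S T : Set Ω) :
    prob P (S ∪ T) ≤ prob P S + prob P T := by
  linarith [prob_union_add_inter P S T, prob_nonneg P hP0 (S ∩ T)]

lemma prob_sub_le_of_subset_union (hP0 : ∀ ω, 0 ≤ P ω) {S T U : Set Ω} (h : S ⊆ T ∪ U) :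
    prob P S - prob P T ≤ prob P U := by
  linarith [prob_mono P hP0 h, prob_union_le P hP0 T U]

lemma sum_prob_and_fiber {ι : Type*} [Fintype ι] (C : Ω → Prop) (f : Ω → ι) :
    ∑ i, prob P {ω | C ω ∧ f ω = i} = prob P {ω | C ω} := by
  classical
  simp only [prob, Set.indicator_apply, Set.mem_ofPred_eq]
  rw [Finset.sum_comm]
  refine Finset.sum_congr rfl fun ω _ => ?_
  by_cases hC : C ω <;> simp [hC]

end Prob

lemma max_stratum_bounds_le_prob_pns {Z : Type} [Fintype Z] (P : ZOmega Z → ℝ)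
    (hP0 : ∀ ω, 0 ≤ P ω) (z : Z) :
    max 0 (max
        (prob P {ω | ω.2.1 = true ∧ ω.2.2.2 = z} -
          prob P {ω | ω.1 = true ∧ ω.2.2.2 = z})
        (max
          (prob P {ω | Yobs ω = true ∧ ω.2.2.2 = z} -
            prob P {ω | ω.1 = true ∧ ω.2.2.2 = z})
          (prob P {ω | ω.2.1 = true ∧ ω.2.2.2 = z} -
            prob P {ω | Yobs ω = true ∧ ω.2.2.2 = z}))) ≤
      prob P {ω | (ω.2.1 = true ∧ ω.1 = false) ∧ ω.2.2.2 = z} := by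
  refine max_le (prob_nonneg P hP0 _) (max_le ?_ (max_le ?_ ?_)) <;>
    refine prob_sub_le_of_subset_union P hP0 ?_ <;>
    rintro ⟨_ | _, _ | _, _ | _, _⟩ <;> simp [Yobs]

theorem covariate_pns_lower_bound_general
    (Z : Type) [Fintype Z]
    (P : ZOmega Z → ℝ) (hP0 : ∀ ω, 0 ≤ P ω) :
    ∑ z : Z, max 0 (max
        (prob P {ω | ω.2.1 = true ∧ ω.2.2.2 = z} -
          prob P {ω | ω.1 = true ∧ ω.2.2.2 = z})
        (max
          (prob P {ω | Yobs ω = true ∧ ω.2.2.2 = z} -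
            prob P {ω | ω.1 = true ∧ ω.2.2.2 = z})
          (prob P {ω | ω.2.1 = true ∧ ω.2.2.2 = z} -
            prob P {ω | Yobs ω = true ∧ ω.2.2.2 = z}))) ≤
      prob P {ω | ω.2.1 = true ∧ ω.1 = false} :=
  (Finset.sum_le_sum fun z _ => max_stratum_bounds_le_prob_pns P hP0 z).trans
    (sum_prob_and_fiber P (fun ω => ω.2.1 = true ∧ ω.1 = false) (fun ω => ω.2.2.2)).le

/-- Covariate-refined lower bound on PNS: `PNS ≥ Σ_z max {0, P(y_x, z) − P(y_{x'}, z),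
P(y, z) − P(y_{x'}, z), P(y_x, z) − P(y, z)}`. -/
theorem covariate_pns_lower_bound
    (Z : Type) [Fintype Z] [Nonempty Z]
    (P : ZOmega Z → ℝ) (hP0 : ∀ ω, 0 ≤ P ω) (hP1 : ∑ ω, P ω = 1) :
    ∑ z : Z, max 0 (max
        (prob P {ω | ω.2.1 = true ∧ ω.2.2.2 = z} -
          prob P {ω | ω.1 = true ∧ ω.2.2.2 = z})
        (max
          (prob P {ω | Yobs ω = true ∧ ω.2.2.2 = z} -
            prob P {ω | ω.1 = true ∧ ω.2.2.2 = z})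
          (prob P {ω | ω.2.1 = true ∧ ω.2.2.2 = z} -
            prob P {ω | Yobs ω = true ∧ ω.2.2.2 = z}))) ≤
      prob P {ω | ω.2.1 = true ∧ ω.1 = false} :=
  covariate_pns_lower_bound_general Z P hP0
end

section
/- Covariate-refined upper bound on PNS (special case of Theorem 1 for a binary model with one non-descendant covariate): for every P as in the context, P(Y₁ = true ∧ Y₀ = false) ≤ Σ_{z ∈ Z} min {P(Y₁ = true ∧ Z = z), P(Y₀ = false ∧ Z = z), P(X = true ∧ Y = true ∧ Z = z) + P(X = false ∧ Y = false ∧ Z = z), P(Y₁ = true ∧ Z = z) − P(Y₀ = true ∧ Z = z) + P(X = true ∧ Y = false ∧ Z = z) + P(X = false ∧ Y = true ∧ Z = z)}. -/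
section prob

variable {Ω : Type*} [Fintype Ω] {P : Ω → ℝ}

theorem prob_mono_s16 (hP : 0 ≤ P) {E F : Set Ω} (h : E ⊆ F) : prob P E ≤ prob P F :=
  Finset.sum_le_sum fun ω _ => Set.indicator_le_indicator_of_subset h hP ω

theorem prob_union {E F : Set Ω} (h : Disjoint E F) :
    prob P (E ∪ F) = prob P E + prob P F := by
  simp only [prob, Set.indicator_union_of_disjoint h, Finset.sum_add_distrib]

theorem prob_inter_add_diff (E F : Set Ω) : prob P (E ∩ F) + prob P (E \ F) = prob P E := by
  rw [← prob_union (Set.disjoint_sdiff_inter.symm), Set.inter_union_sdiff]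

theorem prob_sub_prob (E F : Set Ω) :
    prob P E - prob P F = prob P (E \ F) - prob P (F \ E) := by
  rw [← prob_inter_add_diff E F, ← prob_inter_add_diff F E, Set.inter_comm]
  ring

theorem prob_le_add_of_subset_union (hP : 0 ≤ P) {E F G : Set Ω} (h : E ⊆ F ∪ G) :
    prob P E ≤ prob P F + prob P G :=
  calc prob P E ≤ prob P (F ∪ G \ F) := prob_mono_s16 hP (by rwa [Set.union_sdiff_self])
    _ = prob P F + prob P (G \ F) := prob_union Set.disjoint_sdiff_right
    _ ≤ prob P F + prob P G := by gcongr; exact prob_mono_s16 hP Set.sdiff_subset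

theorem prob_eq_sum_prob_fiber {Z : Type*} [Fintype Z] [DecidableEq Z] (f : Ω → Z) (E : Set Ω) :
    prob P E = ∑ z, prob P {ω | ω ∈ E ∧ f ω = z} := by
  unfold prob
  rw [Finset.sum_comm]
  refine Finset.sum_congr rfl fun ω _ => ?_
  by_cases hω : ω ∈ E <;> simp [Set.indicator, hω]

end prob

theorem Yobs_cases {Z : Type} (ω : ZOmega Z) :
    (ω.2.2.1 = true ∧ Yobs ω = ω.2.1) ∨ (ω.2.2.1 = false ∧ Yobs ω = ω.1) := by
  cases hx : ω.2.2.1 <;> simp [Yobs, hx]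

theorem prob_potential_le_prob_obs {Z : Type} [Fintype Z] {P : ZOmega Z → ℝ} (hP : 0 ≤ P) (a b : Bool) (z : Z) :
    prob P {ω | (ω.2.1 = a ∧ ω.1 = b) ∧ ω.2.2.2 = z} ≤
      prob P {ω | ω.2.2.1 = true ∧ Yobs ω = a ∧ ω.2.2.2 = z} +
        prob P {ω | ω.2.2.1 = false ∧ Yobs ω = b ∧ ω.2.2.2 = z} := by
  refine prob_le_add_of_subset_union hP ?_
  rintro ω ⟨⟨h₁, h₀⟩, hz⟩
  rcases Yobs_cases ω with ⟨hx, hy⟩ | ⟨hx, hy⟩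
  · exact Or.inl ⟨hx, hy.trans h₁, hz⟩
  · exact Or.inr ⟨hx, hy.trans h₀, hz⟩

theorem covariate_pns_upper_bound_general
    (Z : Type) [Fintype Z]
    (P : ZOmega Z → ℝ) (hP0 : ∀ ω, 0 ≤ P ω) :
    prob P {ω | ω.2.1 = true ∧ ω.1 = false} ≤
      ∑ z : Z, min (prob P {ω | ω.2.1 = true ∧ ω.2.2.2 = z}) (min
        (prob P {ω | ω.1 = false ∧ ω.2.2.2 = z})
        (min
          (prob P {ω | ω.2.2.1 = true ∧ Yobs ω = true ∧ ω.2.2.2 = z} +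
            prob P {ω | ω.2.2.1 = false ∧ Yobs ω = false ∧ ω.2.2.2 = z})
          (prob P {ω | ω.2.1 = true ∧ ω.2.2.2 = z} -
            prob P {ω | ω.1 = true ∧ ω.2.2.2 = z} +
            prob P {ω | ω.2.2.1 = true ∧ Yobs ω = false ∧ ω.2.2.2 = z} +
            prob P {ω | ω.2.2.1 = false ∧ Yobs ω = true ∧ ω.2.2.2 = z}))) := by
  classical
  rw [prob_eq_sum_prob_fiber (fun ω => ω.2.2.2)]
  refine Finset.sum_le_sum fun z _ => le_min ?_ (le_min ?_ (le_min ?_ ?_))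
  · exact prob_mono_s16 hP0 fun ω h => ⟨h.1.1, h.2⟩
  · exact prob_mono_s16 hP0 fun ω h => ⟨h.1.2, h.2⟩
  · exact prob_potential_le_prob_obs hP0 true false z
  · set E := {ω : ZOmega Z | ω.2.1 = true ∧ ω.2.2.2 = z}
    set F := {ω : ZOmega Z | ω.1 = true ∧ ω.2.2.2 = z}
    have hpns : prob P {ω | ω ∈ {ω : ZOmega Z | ω.2.1 = true ∧ ω.1 = false} ∧ ω.2.2.2 = z} ≤
        prob P (E \ F) :=
      prob_mono_s16 hP0 fun ω ⟨⟨h₁, h₀⟩, hz⟩ => ⟨⟨h₁, hz⟩, fun h => Bool.false_ne_true (h₀ ▸ h.1)⟩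
    have hharm : prob P (F \ E) ≤ prob P {ω | (ω.2.1 = false ∧ ω.1 = true) ∧ ω.2.2.2 = z} :=
      prob_mono_s16 hP0 fun ω ⟨⟨h₀, hz⟩, hn⟩ => ⟨⟨by simpa [E, hz] using hn, h₀⟩, hz⟩
    linarith [prob_sub_prob (P := P) E F, prob_potential_le_prob_obs hP0 false true z]

/-- Covariate-refined upper bound on PNS: `PNS ≤ Σ_z min {P(y_x, z), P(y'_{x'}, z),
P(x, y, z) + P(x', y', z), P(y_x, z) − P(y_{x'}, z) + P(x, y', z) + P(x', y, z)}`. -/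
theorem covariate_pns_upper_bound
    (Z : Type) [Fintype Z] [Nonempty Z]
    (P : ZOmega Z → ℝ) (hP0 : ∀ ω, 0 ≤ P ω) (hP1 : ∑ ω, P ω = 1) :
    prob P {ω | ω.2.1 = true ∧ ω.1 = false} ≤
      ∑ z : Z, min (prob P {ω | ω.2.1 = true ∧ ω.2.2.2 = z}) (min
        (prob P {ω | ω.1 = false ∧ ω.2.2.2 = z})
        (min
          (prob P {ω | ω.2.2.1 = true ∧ Yobs ω = true ∧ ω.2.2.2 = z} +
            prob P {ω | ω.2.2.1 = false ∧ Yobs ω = false ∧ ω.2.2.2 = z})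
          (prob P {ω | ω.2.1 = true ∧ ω.2.2.2 = z} -
            prob P {ω | ω.1 = true ∧ ω.2.2.2 = z} +
            prob P {ω | ω.2.2.1 = true ∧ Yobs ω = false ∧ ω.2.2.2 = z} +
            prob P {ω | ω.2.2.1 = false ∧ Yobs ω = true ∧ ω.2.2.2 = z}))) :=
  covariate_pns_upper_bound_general Z P hP0
end
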